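/- arXiv:1703.09855 — 2 statements merged into one kernel-verified Lean document; each statement's English description precedes it below -/
import Mathlib

section
/- Let ℓ be a prime and let (F_n, f_n) be an ℓ-adic system of ℤ_ℓ-modules. Then the inverse limit lim F_n is a finitely generated ℤ_ℓ-module. -/
open Pointwise

/-- The inverse limit of an inverse system of `R`-modules indexed by `ℕ`, realized as the
submodule of the product consisting of the compatible families. -/
def invLimit {R : Type*} [CommRing R] (F : ℕ → Type*) [∀ n, AddCommGroup (F n)]
    [∀ n, Module R (F n)] (f : ∀ n, F (n + 1) →ₗ[R] F n) :
    Submodule R (∀ n, F n) where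
  carrier := {x | ∀ n, f n (x (n + 1)) = x n}
  add_mem' {x y} hx hy n := by simp [map_add, hx n, hy n]
  zero_mem' n := by simp
  smul_mem' r x hx n := by simp [map_smul, hx n]

/-- Let `ℓ` be a prime and let `(F n, f n)` be an `ℓ`-adic system of `ℤ_ℓ`-modules: each `F n`
has finite length, `ℓ^(n+1)` annihilates `F n`, and `f n` induces an isomorphism
`F (n+1) / ℓ^(n+1) F (n+1) ≅ F n` (equivalently, `f n` is surjective with kernel
`ℓ^(n+1) • F (n+1)`).  Then the inverse limit `lim F n` is a finitely generated
`ℤ_ℓ`-module. -/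
theorem invLimit_finite_of_ladic (ℓ : ℕ) [Fact (Nat.Prime ℓ)] (F : ℕ → Type*)
    [∀ n, AddCommGroup (F n)] [∀ n, Module (PadicInt ℓ) (F n)]
    (f : ∀ n, F (n + 1) →ₗ[PadicInt ℓ] F n)
    (hfin : ∀ n, IsFiniteLength (PadicInt ℓ) (F n))
    (hann : ∀ n, ∀ x : F n, ((ℓ : PadicInt ℓ) ^ (n + 1)) • x = 0)
    (hsurj : ∀ n, Function.Surjective (f n))
    (hker : ∀ n, LinearMap.ker (f n) =
      ((ℓ : PadicInt ℓ) ^ (n + 1)) • (⊤ : Submodule (PadicInt ℓ) (F (n + 1)))) :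
    Module.Finite (PadicInt ℓ) (invLimit F f) := by
  classical
  -- `F 0` is finitely generated
  have hfin0 : Module.Finite (PadicInt ℓ) (F 0) := by
    have h := isFiniteLength_iff_isNoetherian_isArtinian.mp (hfin 0)
    have : IsNoetherian (PadicInt ℓ) (F 0) := h.1
    exact ⟨IsNoetherian.noetherian ⊤⟩
  obtain ⟨k, e, he⟩ := Module.Finite.exists_fin (R := PadicInt ℓ) (M := F 0)
  -- lift the generators of `F 0` to compatible families
  let xf : Fin k → ∀ n, F n := fun i n => Nat.rec (e i) (fun m ih => (hsurj m ih).choose) n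
  have hx0 : ∀ i, xf i 0 = e i := fun _ => rfl
  have hxc : ∀ i n, f n (xf i (n + 1)) = xf i n := fun i n => (hsurj n (xf i n)).choose_spec
  -- the images of the lifts generate each `F n`
  have base : ∀ n (z : F n),
      ∃ w ∈ Submodule.span (PadicInt ℓ) (Set.range fun i => xf i n),
        ∃ u : F n, z = w + (ℓ : PadicInt ℓ) • u := by
    intro n
    induction n with
    | zero =>
      intro z
      refine ⟨z, ?_, 0, by simp⟩
      have : (Set.range fun i => xf i 0) = Set.range e := by
        simp only [hx0]
      rw [this, he]
      trivial
    | succ n ih =>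
      intro z
      obtain ⟨w, hw, u, hu⟩ := ih (f n z)
      rw [Submodule.mem_span_range_iff_exists_fun (PadicInt ℓ)] at hw
      obtain ⟨c, hc⟩ := hw
      obtain ⟨u', hu'⟩ := hsurj n u
      have hker' : z - (∑ i, c i • xf i (n + 1)) - (ℓ : PadicInt ℓ) • u' ∈
          LinearMap.ker (f n) := by
        rw [LinearMap.mem_ker, map_sub, map_sub, map_smul, map_sum]
        simp only [map_smul, hxc, hu', hc]
        rw [hu]
        abel
      rw [hker n, ← SetLike.mem_coe, Submodule.coe_pointwise_smul] at hker'
      obtain ⟨t, -, ht⟩ := Set.mem_smul_set.mp hker'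
      refine ⟨∑ i, c i • xf i (n + 1),
        Submodule.sum_mem _ fun i _ => Submodule.smul_mem _ _
          (Submodule.subset_span ⟨i, rfl⟩),
        u' + (ℓ : PadicInt ℓ) ^ n • t, ?_⟩
      have : z - (∑ i, c i • xf i (n + 1)) - (ℓ : PadicInt ℓ) • u' =
          (ℓ : PadicInt ℓ) ^ (n + 1) • t := ht.symm
      have hz : z = (∑ i, c i • xf i (n + 1)) + (ℓ : PadicInt ℓ) • u' +
          (ℓ : PadicInt ℓ) ^ (n + 1) • t := by
        rw [← this]; abel
      rw [hz, pow_succ]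
      module
  have iter : ∀ n (m : ℕ) (z : F n),
      ∃ w ∈ Submodule.span (PadicInt ℓ) (Set.range fun i => xf i n),
        ∃ u : F n, z = w + (ℓ : PadicInt ℓ) ^ m • u := by
    intro n m
    induction m with
    | zero => intro z; exact ⟨0, Submodule.zero_mem _, z, by simp⟩
    | succ m ih =>
      intro z
      obtain ⟨w, hw, u, hu⟩ := ih z
      obtain ⟨w', hw', u', hu'⟩ := base n u
      refine ⟨w + (ℓ : PadicInt ℓ) ^ m • w',
        Submodule.add_mem _ hw (Submodule.smul_mem _ _ hw'), u', ?_⟩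
      rw [hu, hu', pow_succ]
      module
  have hgen : ∀ n (z : F n),
      z ∈ Submodule.span (PadicInt ℓ) (Set.range fun i => xf i n) := by
    intro n z
    obtain ⟨w, hw, u, hu⟩ := iter n (n + 1) z
    rw [hu, hann n u, add_zero]
    exact hw
  -- the lifted elements of the inverse limit
  have hxmem : ∀ i, xf i ∈ invLimit F f := fun i n => hxc i n
  let x : Fin k → invLimit F f := fun i => ⟨xf i, hxmem i⟩
  -- they generate the inverse limit
  rw [Module.finite_def, Submodule.fg_def]
  refine ⟨Set.range x, Set.finite_range x, ?_⟩
  rw [eq_top_iff]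
  rintro y -
  have hl : (0 : ℝ) < ℓ := by exact_mod_cast (Fact.out : ℓ.Prime).pos
  -- coefficient solution sets
  set A : ℕ → Set (Fin k → PadicInt ℓ) :=
    fun n => {a | ∑ i, a i • xf i n = (y : ∀ n, F n) n} with hA
  have hne : ∀ n, (A n).Nonempty := by
    intro n
    obtain ⟨c, hc⟩ := (Submodule.mem_span_range_iff_exists_fun (PadicInt ℓ)).mp (hgen n ((y : ∀ n, F n) n))
    exact ⟨c, hc⟩
  have hmono : ∀ n, A (n + 1) ⊆ A n := by
    intro n a ha
    simp only [hA, Set.mem_setOf_eq] at ha ⊢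
    calc ∑ i, a i • xf i n = f n (∑ i, a i • xf i (n + 1)) := by
          rw [map_sum]; simp only [map_smul, hxc]
      _ = f n ((y : ∀ n, F n) (n + 1)) := by rw [ha]
      _ = (y : ∀ n, F n) n := y.2 n
  have hclosed : ∀ n, IsClosed (A n) := by
    intro n
    rw [← isOpen_compl_iff, Metric.isOpen_iff]
    intro a ha
    refine ⟨(ℓ : ℝ) ^ (-(n + 1 : ℕ) : ℤ), by positivity, ?_⟩
    intro b hb hbA
    apply ha
    have hdvd : ∀ i, ((ℓ : PadicInt ℓ) ^ (n + 1)) ∣ (b i - a i) := by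
      intro i
      have h1 : dist (b i) (a i) < (ℓ : ℝ) ^ (-(n + 1 : ℕ) : ℤ) :=
        (dist_pi_lt_iff (by positivity)).mp hb i
      have h2 : ‖b i - a i‖ ≤ (ℓ : ℝ) ^ (-(n + 1 : ℕ) : ℤ) := by
        rw [← dist_eq_norm]; exact le_of_lt h1
      have := (PadicInt.norm_le_pow_iff_mem_span_pow (b i - a i) (n + 1)).mp h2
      exact Ideal.mem_span_singleton.mp this
    show a ∈ A n
    simp only [hA, Set.mem_setOf_eq] at hbA ⊢
    rw [← hbA]
    apply Finset.sum_congr rfl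
    intro i _
    obtain ⟨d, hd⟩ := hdvd i
    have : b i = a i + (ℓ : PadicInt ℓ) ^ (n + 1) * d := by
      rw [← hd]; ring
    rw [this, add_smul, mul_smul, smul_comm ((ℓ : PadicInt ℓ) ^ (n + 1)) d, hann n, smul_zero,
      add_zero]
  have hcompact : IsCompact (A 0) :=
    (hclosed 0).isCompact
  obtain ⟨a, ha⟩ := IsCompact.nonempty_iInter_of_sequence_nonempty_isCompact_isClosed
    A hmono hne hcompact hclosed
  have ha' : ∀ n, a ∈ A n := Set.mem_iInter.mp ha
  have hy : y = ∑ i, a i • x i := by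
    apply Subtype.ext
    funext n
    have : ((∑ i, a i • x i : invLimit F f) : ∀ n, F n) n = ∑ i, a i • xf i n := by
      push_cast
      simp [x]
    rw [this]
    exact (ha' n).symm
  rw [hy]
  exact Submodule.sum_mem _ fun i _ =>
    Submodule.smul_mem _ _ (Submodule.subset_span ⟨i, rfl⟩)
end

section
/- Let ℓ be a prime and let (F_n, f_n) be an ℓ-adic system of ℤ_ℓ-modules, with inverse limit M = lim F_n. Then for every n the canonical projection M → F_n is surjective with kernel equal to ℓ^{n+1}·M; consequently it induces an isomorphism M/ℓ^{n+1}M ≅ F_n, and these isomorphisms commute with the transition maps (on the source, with the quotient maps M/ℓ^{n+2}M → M/ℓ^{n+1}M). -/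
/-!
Each `F n` has a composition series whose factors are `ℤ_ℓ ⧸ (ℓ) ≅ 𝔽_ℓ`, so it is finite, and
König's lemma (`nonempty_sections_of_finite_inverse_system`) yields a point of `M` inside any
family of nonempty subsets `S k ⊆ F k` with `f k (S (k + 1)) ⊆ S k`. Taking for `S k` the fibre
of `F k → F n` over a point gives surjectivity of `M → F n`. For `x` in its kernel, every `x k`
lies in the kernel of `F k → F n`, which is `ℓ ^ (n + 1) • F k` by induction on `k`, so the sets
`S k = {z | ℓ ^ (n + 1) • z = x k}` are nonempty and König's lemma divides `x` by `ℓ ^ (n + 1)`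
in `M`. The isomorphisms `M ⧸ ℓ ^ (n + 1) M ≃ F n` are then given by the first isomorphism
theorem.
-/

open Pointwise

/-- The canonical projection `lim F → F n` from the inverse limit of an inverse system. -/
def invLimitProj {R : Type*} [CommRing R] (F : ℕ → Type*) [∀ n, AddCommGroup (F n)]
    [∀ n, Module R (F n)] (f : ∀ n, F (n + 1) →ₗ[R] F n) (n : ℕ) :
    invLimit F f →ₗ[R] F n :=
  (LinearMap.proj n).comp (invLimit F f).subtype

theorem IsFiniteLength.finite {R : Type*} [Ring R]
    (hR : ∀ I : Ideal R, I.IsMaximal → Finite (R ⧸ I)) {M : Type*} [AddCommGroup M]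
    [Module R M] (h : IsFiniteLength R M) : Finite M := by
  induction h with
  | of_subsingleton => exact Finite.of_subsingleton
  | @of_simple_quotient M _ _ N _ _ ih =>
    obtain ⟨I, hI, ⟨e⟩⟩ := isSimpleModule_iff_quot_maximal.mp ‹IsSimpleModule R (M ⧸ N)›
    have := hR I hI
    have : Finite (M ⧸ N.toAddSubgroup) := .of_equiv _ e.symm.toEquiv
    have : Finite N.toAddSubgroup := ih
    exact .of_addSubgroup_quotient N.toAddSubgroup

theorem PadicInt.finite_quotient_of_isMaximal (p : ℕ) [Fact p.Prime] (I : Ideal ℤ_[p])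
    (hI : I.IsMaximal) : Finite (ℤ_[p] ⧸ I) := by
  rw [IsLocalRing.eq_maximalIdeal hI, ← PadicInt.ker_toZMod]
  exact .of_equiv _
    (RingHom.quotientKerEquivOfSurjective (ZMod.ringHom_surjective _)).symm.toEquiv

section InverseSystem

variable {R : Type*} [CommRing R] {F : ℕ → Type*} [∀ n, AddCommGroup (F n)]
    [∀ n, Module R (F n)] (f : ∀ n, F (n + 1) →ₗ[R] F n)

noncomputable def transitionMap {n m : ℕ} (h : n ≤ m) : F m →ₗ[R] F n :=
  Nat.leRec (motive := fun m _ => F m →ₗ[R] F n) LinearMap.id (fun k _ g => g ∘ₗ f k) h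

theorem transitionMap_self (n : ℕ) : transitionMap f (le_refl n) = LinearMap.id :=
  Nat.leRec_self _ _

theorem transitionMap_succ {n m : ℕ} (h : n ≤ m) :
    transitionMap f (h.trans m.le_succ) = transitionMap f h ∘ₗ f m :=
  Nat.leRec_succ _ _ h

theorem transitionMap_surjective (hsurj : ∀ n, Function.Surjective (f n)) {n m : ℕ}
    (h : n ≤ m) : Function.Surjective (transitionMap f h) := by
  induction m, h using Nat.le_induction with
  | base => rw [transitionMap_self]; exact Function.surjective_id
  | succ m h ih => rw [transitionMap_succ]; exact ih.comp (hsurj m)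

theorem transitionMap_apply_of_mem_invLimit {x : ∀ n, F n} (hx : x ∈ invLimit F f) {n m : ℕ}
    (h : n ≤ m) : transitionMap f h (x m) = x n := by
  induction m, h using Nat.le_induction with
  | base => rw [transitionMap_self]; rfl
  | succ m h ih => rw [transitionMap_succ f h, LinearMap.comp_apply, hx m, ih]

theorem ker_transitionMap_le (ϖ : R) (hsurj : ∀ n, Function.Surjective (f n))
    (hker : ∀ n, LinearMap.ker (f n) = ϖ ^ (n + 1) • (⊤ : Submodule R (F (n + 1))))
    {n m : ℕ} (h : n ≤ m) : LinearMap.ker (transitionMap f h) ≤ ϖ ^ (n + 1) • ⊤ := by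
  induction m, h using Nat.le_induction with
  | base => simp [transitionMap_self]
  | succ m h ih =>
    intro z hz
    rw [LinearMap.mem_ker, transitionMap_succ f h, LinearMap.comp_apply] at hz
    obtain ⟨w, -, hw⟩ := (Submodule.mem_smul_pointwise_iff_exists _ _ _).mp (ih hz)
    obtain ⟨w', rfl⟩ := hsurj m w
    -- correct the lift `w'` by an element of `ker (f m) = ϖ ^ (m + 1) • F (m + 1)`
    have hdiff : z - ϖ ^ (n + 1) • w' ∈ LinearMap.ker (f m) := by
      rw [LinearMap.mem_ker, map_sub, map_smul, hw, sub_self]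
    rw [hker m] at hdiff
    obtain ⟨v, -, hv⟩ := (Submodule.mem_smul_pointwise_iff_exists _ _ _).mp hdiff
    have hpow : ϖ ^ (m + 1) = ϖ ^ (n + 1) * ϖ ^ (m - n) := by rw [← pow_add]; congr 1; omega
    rw [← sub_add_cancel z (ϖ ^ (n + 1) • w'), ← hv, hpow, mul_smul, ← smul_add]
    exact Submodule.smul_mem_pointwise_smul _ _ _ Submodule.mem_top

open CategoryTheory in
theorem exists_mem_invLimit_forall_mem [∀ n, Finite (F n)] (S : ∀ n, Set (F n))
    (hne : ∀ n, (S n).Nonempty) (hmaps : ∀ n, Set.MapsTo (f n) (S (n + 1)) (S n)) :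
    ∃ x ∈ invLimit F f, ∀ n, x n ∈ S n := by
  have : ∀ n, Nonempty (S n) := fun n => (hne n).to_subtype
  let G : ℕᵒᵖ ⥤ Type _ := Functor.ofOpSequence (X := fun n => S n)
    fun n => TypeCat.ofHom (Set.MapsTo.restrict (f n) _ _ (hmaps n))
  have : ∀ j : ℕᵒᵖ, Finite (G.obj j) := fun j => inferInstanceAs (Finite (S j.unop))
  have : ∀ j : ℕᵒᵖ, Nonempty (G.obj j) := fun j => inferInstanceAs (Nonempty (S j.unop))
  obtain ⟨s, hs⟩ := nonempty_sections_of_finite_inverse_system G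
  refine ⟨fun n => (s (.op n)).1, fun n => ?_, fun n => (s (.op n)).2⟩
  have := hs (homOfLE (Nat.le_add_right n 1)).op
  rw [Functor.ofOpSequence_map_homOfLE_succ] at this
  exact congrArg Subtype.val this

variable [∀ n, Finite (F n)]

theorem invLimitProj_surjective (hsurj : ∀ n, Function.Surjective (f n)) (n : ℕ) :
    Function.Surjective (invLimitProj F f n) := by
  intro a
  -- below level `n` there is no constraint
  obtain ⟨x, hx, hxS⟩ := exists_mem_invLimit_forall_mem f
    (fun k => {z | ∀ h : n ≤ k, transitionMap f h z = a})
    (fun k => by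
      by_cases h : n ≤ k
      · obtain ⟨z, hz⟩ := transitionMap_surjective f hsurj h a
        exact ⟨z, fun _ => hz⟩
      · exact ⟨0, fun h' => absurd h' h⟩)
    (fun k z hz h => by rw [← LinearMap.comp_apply, ← transitionMap_succ]; exact hz _)
  refine ⟨⟨x, hx⟩, ?_⟩
  simpa [transitionMap_self, invLimitProj] using hxS n le_rfl

theorem ker_invLimitProj (ϖ : R) (hann : ∀ n, ∀ x : F n, ϖ ^ (n + 1) • x = 0)
    (hsurj : ∀ n, Function.Surjective (f n))
    (hker : ∀ n, LinearMap.ker (f n) = ϖ ^ (n + 1) • (⊤ : Submodule R (F (n + 1)))) (n : ℕ) :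
    LinearMap.ker (invLimitProj F f n) = ϖ ^ (n + 1) • (⊤ : Submodule R (invLimit F f)) := by
  refine le_antisymm (fun x hx => ?_) ?_
  · have hxn : x.1 n = 0 := hx
    have hdiv : ∀ k, ∃ z, ϖ ^ (n + 1) • z = x.1 k := by
      intro k
      rcases le_total k n with h | h
      · refine ⟨0, ?_⟩
        rw [smul_zero, ← transitionMap_apply_of_mem_invLimit f x.2 h, hxn, map_zero]
      · have hmem : x.1 k ∈ LinearMap.ker (transitionMap f h) := by
          rw [LinearMap.mem_ker, transitionMap_apply_of_mem_invLimit f x.2 h, hxn]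
        obtain ⟨z, -, hz⟩ := (Submodule.mem_smul_pointwise_iff_exists _ _ _).mp
          (ker_transitionMap_le f ϖ hsurj hker h hmem)
        exact ⟨z, hz⟩
    obtain ⟨y, hy, hyS⟩ := exists_mem_invLimit_forall_mem f
      (fun k => {z | ϖ ^ (n + 1) • z = x.1 k}) hdiv
      (fun k z (hz : ϖ ^ (n + 1) • z = x.1 (k + 1)) => by
        rw [Set.mem_ofPred_eq, ← map_smul, hz, x.2 k])
    exact (Submodule.mem_smul_pointwise_iff_exists _ _ _).mpr
      ⟨⟨y, hy⟩, Submodule.mem_top, Subtype.ext (funext hyS)⟩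
  · intro x hx
    obtain ⟨y, -, rfl⟩ := (Submodule.mem_smul_pointwise_iff_exists _ _ _).mp hx
    rw [LinearMap.mem_ker, map_smul]
    exact hann n _

end InverseSystem

/-- Let `ℓ` be a prime and let `(F n, f n)` be an `ℓ`-adic system of `ℤ_ℓ`-modules, with
inverse limit `M = lim F n`.  Then for each `n` the canonical projection `M → F n` is
surjective with kernel `ℓ^(n+1) • M`; consequently it induces an isomorphism
`M / ℓ^(n+1) M ≅ F n`, and these isomorphisms commute with the transition maps `f n` on one
side and the canonical quotient maps `M / ℓ^(n+2) M → M / ℓ^(n+1) M` on the other. -/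
theorem invLimitProj_surjective_ker_and_iso (ℓ : ℕ) [Fact (Nat.Prime ℓ)] (F : ℕ → Type*)
    [∀ n, AddCommGroup (F n)] [∀ n, Module (PadicInt ℓ) (F n)]
    (f : ∀ n, F (n + 1) →ₗ[PadicInt ℓ] F n)
    (hfin : ∀ n, IsFiniteLength (PadicInt ℓ) (F n))
    (hann : ∀ n, ∀ x : F n, ((ℓ : PadicInt ℓ) ^ (n + 1)) • x = 0)
    (hsurj : ∀ n, Function.Surjective (f n))
    (hker : ∀ n, LinearMap.ker (f n) =
      ((ℓ : PadicInt ℓ) ^ (n + 1)) • (⊤ : Submodule (PadicInt ℓ) (F (n + 1)))) :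
    -- each projection is surjective
    (∀ n, Function.Surjective (invLimitProj F f n)) ∧
    -- each projection has kernel `ℓ^(n+1) • M`
    (∀ n, LinearMap.ker (invLimitProj F f n) =
      ((ℓ : PadicInt ℓ) ^ (n + 1)) • (⊤ : Submodule (PadicInt ℓ) (invLimit F f))) ∧
    -- the induced isomorphisms `M / ℓ^(n+1) M ≅ F n` commute with the transition maps
    ∃ e : ∀ n, ((invLimit F f) ⧸
        (((ℓ : PadicInt ℓ) ^ (n + 1)) • (⊤ : Submodule (PadicInt ℓ) (invLimit F f))))
        ≃ₗ[PadicInt ℓ] F n,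
      (∀ n (x : invLimit F f), e n (Submodule.Quotient.mk x) = invLimitProj F f n x) ∧
      (∀ n (x : invLimit F f),
        f n (e (n + 1) (Submodule.Quotient.mk x)) = e n (Submodule.Quotient.mk x)) := by
  have : ∀ n, Finite (F n) := fun n =>
    (hfin n).finite (PadicInt.finite_quotient_of_isMaximal ℓ)
  have hproj := invLimitProj_surjective f hsurj
  have hkerProj := ker_invLimitProj f (ℓ : PadicInt ℓ) hann hsurj hker
  let e n := (Submodule.quotEquivOfEq _ _ (hkerProj n).symm).trans
    ((invLimitProj F f n).quotKerEquivOfSurjective (hproj n))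
  have he : ∀ n (x : invLimit F f), e n (Submodule.Quotient.mk x) = invLimitProj F f n x :=
    fun _ _ => rfl
  refine ⟨hproj, hkerProj, e, he, fun n x => ?_⟩
  rw [he, he]
  exact x.2 n
end
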